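/- arXiv:2004.14305 — 2 statements merged into one kernel-verified Lean document; each statement's English description precedes it below -/
import Mathlib

section
/- Let α ∈ (0,1) ∪ (1,2) and λ > 0. Then for all t > 0, the derivative of t ↦ E_{α,1}(−λ t^α) equals −λ t^{α−1} E_{α,α}(−λ t^α). -/
/-!
Termwise differentiation of the power series `E_{a,1}(x) = ∑ xⁿ / Γ(a n + 1)` is legitimate on
every interval `(-R, R)` because `Γ (a n + b)` outgrows every geometric sequence. The derived series
`∑ n xⁿ⁻¹ / Γ(a n + 1)` equals `E_{a,a}(x) / a` by `Γ(a (n + 1) + 1) = a (n + 1) Γ(a n + a)`,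
and the chain rule with `d/dt (-λ t^α) = -λ α t^(α-1)` gives the claim.
-/

/-- The Mittag-Leffler function `E_{a,b}(x) = ∑ xᵏ / Γ(a k + b)` (real version). -/
noncomputable def ML (a b x : ℝ) : ℝ := ∑' k : ℕ, x ^ k / Real.Gamma (a * k + b)

open Filter

-- `c ^ x ≤ c ^ (m + 2)` and `c ^ m ≤ exp c * m ! ≤ exp c * Γ x` for `m = ⌊x - 1⌋₊`.
theorem rpow_le_sq_mul_exp_mul_Gamma {x c : ℝ} (hx : 2 ≤ x) (hc : 1 ≤ c) :
    c ^ x ≤ c ^ 2 * Real.exp c * Real.Gamma x := by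
  set m := ⌊x - 1⌋₊
  have hmx : (m : ℝ) + 1 ≤ x := by linarith [Nat.floor_le (by linarith : (0 : ℝ) ≤ x - 1)]
  have hxm : x < m + 2 := by linarith [Nat.lt_floor_add_one (x - 1)]
  have hm1 : (1 : ℝ) ≤ m := by exact_mod_cast Nat.le_floor (by norm_num; linarith)
  have h_fact : (m.factorial : ℝ) ≤ Real.Gamma x := by
    rw [← Real.Gamma_nat_eq_factorial]
    exact Real.Gamma_strictMonoOn_Ici.monotoneOn (by simp; linarith) (by simp; linarith) hmx
  have h_exp : c ^ m ≤ Real.exp c * m.factorial :=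
    (div_le_iff₀ (by positivity)).mp (Real.pow_div_factorial_le_exp (x := c) (by linarith) m)
  calc c ^ x ≤ c ^ ((m : ℝ) + 2) := Real.rpow_le_rpow_of_exponent_le hc hxm.le
    _ = c ^ 2 * c ^ m := by
      rw [Real.rpow_add (by linarith), Real.rpow_natCast, mul_comm]; norm_cast
    _ ≤ c ^ 2 * (Real.exp c * Real.Gamma x) := by gcongr; exact h_exp.trans (by gcongr)
    _ = c ^ 2 * Real.exp c * Real.Gamma x := by ring

theorem summable_pow_div_Gamma {a b : ℝ} (ha : 0 < a) (hb : 0 < b) (C : ℝ) :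
    Summable fun n : ℕ => C ^ n / Real.Gamma (a * n + b) := by
  obtain ⟨c, hca, hc⟩ := (((tendsto_rpow_atTop ha).eventually_ge_atTop (2 * |C|)).and
    (eventually_ge_atTop 1)).exists
  refine .of_norm_bounded_eventually_nat
    (summable_geometric_two.mul_left (c ^ 2 * Real.exp c)) ?_
  have h_large : ∀ᶠ n : ℕ in atTop, 2 ≤ a * n + b :=
    (tendsto_natCast_atTop_atTop.const_mul_atTop ha).atTop_add tendsto_const_nhds
      |>.eventually_ge_atTop 2
  filter_upwards [h_large] with n hn
  have hΓ : 0 < Real.Gamma (a * n + b) := Real.Gamma_pos_of_pos (by linarith)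
  have h_pow : (2 * |C|) ^ n ≤ c ^ (a * n + b) := calc
    (2 * |C|) ^ n ≤ (c ^ a) ^ n := by gcongr
    _ = c ^ (a * n) := by rw [← Real.rpow_natCast, ← Real.rpow_mul (by linarith)]
    _ ≤ c ^ (a * n + b) := Real.rpow_le_rpow_of_exponent_le hc (by linarith)
  rw [norm_div, Real.norm_of_nonneg hΓ.le, norm_pow, Real.norm_eq_abs, div_le_iff₀ hΓ]
  have h_growth := h_pow.trans (rpow_le_sq_mul_exp_mul_Gamma hn hc)
  calc |C| ^ n = (2 * |C|) ^ n * (1 / 2) ^ n := by rw [← mul_pow]; ring_nf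
    _ ≤ c ^ 2 * Real.exp c * Real.Gamma (a * n + b) * (1 / 2) ^ n := by gcongr
    _ = _ := by ring

theorem Gamma_mul_succ_add_one {a : ℝ} (ha : 0 < a) (n : ℕ) :
    Real.Gamma (a * (n + 1 : ℕ) + 1) = a * (n + 1) * Real.Gamma (a * n + a) := by
  rw [show a * (n + 1 : ℕ) + 1 = (a * n + a) + 1 by push_cast; ring,
    Real.Gamma_add_one (by positivity)]
  ring

theorem succ_mul_pow_div_Gamma {a : ℝ} (ha : 0 < a) (y : ℝ) (n : ℕ) :
    (n + 1 : ℕ) * y ^ (n + 1 - 1) / Real.Gamma (a * (n + 1 : ℕ) + 1)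
      = a⁻¹ * (y ^ n / Real.Gamma (a * n + a)) := by
  have hΓ : Real.Gamma (a * n + a) ≠ 0 := (Real.Gamma_pos_of_pos (by positivity)).ne'
  rw [Gamma_mul_succ_add_one ha, Nat.add_sub_cancel]
  push_cast
  field_simp

theorem hasDerivAt_ML_one {a : ℝ} (ha : 0 < a) (x : ℝ) :
    HasDerivAt (ML a 1) (ML a a x / a) x := by
  set R := |x| + 1
  set u : ℕ → ℝ := fun n => n * R ^ (n - 1) / Real.Gamma (a * n + 1)
  have hu : Summable u := by
    rw [← summable_nat_add_iff 1]
    simp only [u, succ_mul_pow_div_Gamma ha]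
    exact (summable_pow_div_Gamma ha ha R).mul_left _
  have hbound : ∀ (n : ℕ), ∀ y ∈ Set.Ioo (-R) R,
      ‖n * y ^ (n - 1) / Real.Gamma (a * n + 1)‖ ≤ u n := by
    intro n y hy
    have hΓ : 0 < Real.Gamma (a * n + 1) := Real.Gamma_pos_of_pos (by positivity)
    simp only [u, norm_div, norm_mul, norm_pow, Real.norm_of_nonneg hΓ.le, Real.norm_natCast]
    gcongr
    exact abs_le.mpr ⟨hy.1.le, hy.2.le⟩
  have hx : x ∈ Set.Ioo (-R) R := ⟨by linarith [neg_abs_le x], by linarith [le_abs_self x]⟩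
  refine (hasDerivAt_tsum_of_isPreconnected hu isOpen_Ioo isPreconnected_Ioo
    (fun n y _ => (hasDerivAt_pow n y).div_const (Real.Gamma (a * n + 1))) hbound hx
    (summable_pow_div_Gamma ha one_pos x) hx).congr_deriv ?_
  rw [tsum_eq_zero_add']
  · simp only [succ_mul_pow_div_Gamma ha, tsum_mul_left, ML]
    rw [Nat.cast_zero, zero_mul, zero_div, zero_add, inv_mul_eq_div]
  · simp only [succ_mul_pow_div_Gamma ha]
    exact (summable_pow_div_Gamma ha ha x).mul_left _

theorem deriv_mittagLeffler_general (α lam : ℝ) (hα : α ∈ Set.Ioo 0 1 ∪ Set.Ioo 1 2)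
    (t : ℝ) (ht : 0 < t) :
    HasDerivAt (fun s : ℝ => ML α 1 (-lam * s ^ α))
      (-lam * t ^ (α - 1) * ML α α (-lam * t ^ α)) t := by
  have hα0 : 0 < α := by rcases hα with h | h <;> linarith [h.1]
  have h_inner : HasDerivAt (fun s : ℝ => -lam * s ^ α) (-lam * (α * t ^ (α - 1))) t :=
    (Real.hasDerivAt_rpow_const (Or.inl ht.ne')).const_mul (-lam)
  refine ((hasDerivAt_ML_one hα0 _).comp t h_inner).congr_deriv ?_
  field_simp

theorem deriv_mittagLeffler (α lam : ℝ) (hα : α ∈ Set.Ioo 0 1 ∪ Set.Ioo 1 2)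
    (hlam : 0 < lam) (t : ℝ) (ht : 0 < t) :
    HasDerivAt (fun s : ℝ => ML α 1 (-lam * s ^ α))
      (-lam * t ^ (α - 1) * ML α α (-lam * t ^ α)) t :=
  deriv_mittagLeffler_general α lam hα t ht
end

section
/- Let α > 0, λ ≥ 0, and p > 0 with p^α > λ. Then the Laplace transform of t ↦ t^{α−1} E_{α,α}(−λ t^α) at p equals 1/(p^α + λ); that is, ∫_0^∞ e^{−p t} t^{α−1} E_{α,α}(−λ t^α) dt = 1/(p^α + λ). -/
open MeasureTheory Real Set

lemma integrableOn_rpow_sub_one_mul_exp_neg_mul {a r : ℝ} (ha : 0 < a) (hr : 0 < r) :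
    IntegrableOn (fun t : ℝ => t ^ (a - 1) * exp (-(r * t))) (Ioi 0) :=
  -- a non-integrable function has Bochner integral `0`
  Integrable.of_integral_ne_zero (by rw [integral_rpow_mul_exp_neg_mul_Ioi ha hr]; positivity)

noncomputable def laplaceMLTerm (α β p x : ℝ) (k : ℕ) (t : ℝ) : ℝ :=
  x ^ k / Gamma (α * k + β) * (t ^ (α * k + β - 1) * exp (-(p * t)))

section

variable {α β p : ℝ}

lemma tsum_laplaceMLTerm (x : ℝ) {t : ℝ} (ht : 0 < t) :
    ∑' k, laplaceMLTerm α β p x k t = exp (-p * t) * t ^ (β - 1) * ML α β (x * t ^ α) := by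
  rw [ML, ← tsum_mul_left]
  congr 1 with k
  have hpow : t ^ (α * k + β - 1) = t ^ (β - 1) * (t ^ α) ^ k := by
    rw [← rpow_natCast, ← rpow_mul ht.le, ← rpow_add ht]
    congr 1
    ring
  rw [laplaceMLTerm, hpow, mul_pow, neg_mul]
  ring

lemma norm_laplaceMLTerm (hα : 0 ≤ α) (hβ : 0 < β) (x : ℝ) (k : ℕ) {t : ℝ} (ht : 0 < t) :
    ‖laplaceMLTerm α β p x k t‖ = laplaceMLTerm α β p |x| k t := by
  have hΓ : 0 < Gamma (α * k + β) := Gamma_pos_of_pos (by positivity)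
  rw [laplaceMLTerm, laplaceMLTerm, norm_mul, norm_div, norm_pow, Real.norm_eq_abs,
    Real.norm_of_nonneg hΓ.le, Real.norm_of_nonneg (by positivity)]

variable (hα : 0 ≤ α) (hβ : 0 < β) (hp : 0 < p)
include hα hβ hp

lemma integrableOn_laplaceMLTerm (x : ℝ) (k : ℕ) :
    IntegrableOn (laplaceMLTerm α β p x k) (Ioi 0) :=
  (integrableOn_rpow_sub_one_mul_exp_neg_mul (by positivity) hp).const_mul _

lemma integral_laplaceMLTerm (x : ℝ) (k : ℕ) :
    ∫ t in Ioi 0, laplaceMLTerm α β p x k t = (p ^ β)⁻¹ * (x / p ^ α) ^ k := by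
  have hΓ : 0 < Gamma (α * k + β) := Gamma_pos_of_pos (by positivity)
  have hpow : (1 / p) ^ (α * k + β) = (p ^ β)⁻¹ * ((p ^ α) ^ k)⁻¹ := by
    rw [one_div, inv_rpow hp.le, rpow_add hp, rpow_mul hp.le, rpow_natCast, mul_inv, mul_comm]
  simp only [laplaceMLTerm]
  rw [integral_const_mul, integral_rpow_mul_exp_neg_mul_Ioi (by positivity) hp, hpow, div_pow]
  field_simp

theorem laplace_rpow_sub_one_mul_ML {x : ℝ} (hx : |x| < p ^ α) :
    ∫ t in Ioi 0, exp (-p * t) * t ^ (β - 1) * ML α β (x * t ^ α)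
      = (p ^ β)⁻¹ * (1 - x / p ^ α)⁻¹ := by
  have hpα : 0 < p ^ α := rpow_pos_of_pos hp α
  have hratio : |x| / p ^ α < 1 := (div_lt_one hpα).2 hx
  have hsummable : Summable fun k => ∫ t in Ioi 0, ‖laplaceMLTerm α β p x k t‖ := by
    have hnorm (k : ℕ) : ∫ t in Ioi 0, ‖laplaceMLTerm α β p x k t‖
        = (p ^ β)⁻¹ * (|x| / p ^ α) ^ k := by
      rw [← integral_laplaceMLTerm hα hβ hp]
      exact setIntegral_congr_fun measurableSet_Ioi fun t ht => norm_laplaceMLTerm hα hβ x k ht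
    simp_rw [hnorm]
    exact (summable_geometric_of_lt_one (by positivity) hratio).mul_left _
  have hgeom : ‖x / p ^ α‖ < 1 := by rwa [norm_div, Real.norm_eq_abs, Real.norm_of_nonneg hpα.le]
  calc ∫ t in Ioi 0, exp (-p * t) * t ^ (β - 1) * ML α β (x * t ^ α)
      = ∫ t in Ioi 0, ∑' k, laplaceMLTerm α β p x k t :=
        setIntegral_congr_fun measurableSet_Ioi fun t ht => (tsum_laplaceMLTerm x ht).symm
    _ = ∑' k, ∫ t in Ioi 0, laplaceMLTerm α β p x k t :=
        (integral_tsum_of_summable_integral_norm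
          (fun k => integrableOn_laplaceMLTerm hα hβ hp x k) hsummable).symm
    _ = (p ^ β)⁻¹ * (1 - x / p ^ α)⁻¹ := by
        simp_rw [integral_laplaceMLTerm hα hβ hp, tsum_mul_left, tsum_geometric_of_norm_lt_one hgeom]

end

theorem laplace_mittagLeffler (α lam p : ℝ) (hα : 0 < α) (hlam : 0 ≤ lam)
    (hp : 0 < p) (hplam : lam < p ^ α) :
    ∫ t in Set.Ioi (0:ℝ), Real.exp (-p * t) * t ^ (α - 1) * ML α α (-lam * t ^ α)
      = 1 / (p ^ α + lam) := by
  rw [laplace_rpow_sub_one_mul_ML hα.le hα hp (by rwa [abs_neg, abs_of_nonneg hlam]), neg_div,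
    sub_neg_eq_add]
  field_simp
end
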